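/- arXiv:2004.09565 — 2 statements merged into one kernel-verified Lean document; each statement's English description precedes it below -/
import Mathlib

section
/- Under the standing assumptions, the regularizer R_c(u) = Σ_λ w_λ |(E(u))_λ|^q + (c/2)‖u − D(E(u))‖² is weakly sequentially lower semicontinuous on X. -/
open scoped ENNReal
open RealInnerProductSpace Filter Topology

/-- Weak sequential convergence in a real Hilbert space. -/
def WeakConv {X : Type*} [NormedAddCommGroup X] [InnerProductSpace ℝ X]
    (u : ℕ → X) (l : X) : Prop :=
  ∀ v : X, Tendsto (fun k => ⟪v, u k⟫) atTop (nhds ⟪v, l⟫)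

/-- Weak sequential continuity of a map between real Hilbert spaces. -/
def WeakSeqCont {X Y : Type*} [NormedAddCommGroup X] [InnerProductSpace ℝ X]
    [NormedAddCommGroup Y] [InnerProductSpace ℝ Y] (F : X → Y) : Prop :=
  ∀ (u : ℕ → X) (l : X), WeakConv u l → WeakConv (fun k => F (u k)) (F l)

/-!
Working in `ℝ≥0∞` makes `liminf` superadditive with no boundedness side conditions, so the two
terms of `R_c` can be treated separately. Weak convergence of `E (u k)` in `ℓ²` gives coordinatewise
convergence, hence convergence of every summand of the weighted `ℓ^q` series, and a series of
nonnegative terms is lower semicontinuous under termwise convergence (Fatou, through the finite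
partial sums). The residuals `u k - D (E (u k))` converge weakly, and the norm is weakly lower
semicontinuous.
-/

theorem ENNReal.liminf_add_liminf_le_liminf_add (f g : ℕ → ℝ≥0∞) :
    liminf f atTop + liminf g atTop ≤ liminf (fun k => f k + g k) atTop := by
  have hmono (h : ℕ → ℝ≥0∞) : Monotone fun n => ⨅ i ≥ n, h i :=
    fun _ _ hnm => le_iInf₂ fun i hi => iInf₂_le i (hnm.trans hi)
  simp only [liminf_eq_iSup_iInf_of_nat]
  rw [ENNReal.iSup_add_iSup_of_monotone (hmono f) (hmono g)]
  exact iSup_mono fun n => le_iInf₂ fun i hi => add_le_add (iInf₂_le i hi) (iInf₂_le i hi)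

theorem ENNReal.tsum_le_liminf_tsum_of_tendsto {ι α : Type*} {F : Filter α} [F.NeBot]
    {f : α → ι → ℝ≥0∞} {g : ι → ℝ≥0∞} (hfg : ∀ i, Tendsto (fun k => f k i) F (𝓝 (g i))) :
    ∑' i, g i ≤ liminf (fun k => ∑' i, f k i) F := by
  rw [ENNReal.tsum_eq_iSup_sum]
  refine iSup_le fun s => ?_
  calc ∑ i ∈ s, g i = liminf (fun k => ∑ i ∈ s, f k i) F :=
        (tendsto_finsetSum s fun i _ => hfg i).liminf_eq.symm
    _ ≤ liminf (fun k => ∑' i, f k i) F :=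
        liminf_le_liminf (Eventually.of_forall fun k => ENNReal.sum_le_tsum s)

namespace WeakConv

variable {X : Type*} [NormedAddCommGroup X] [InnerProductSpace ℝ X]

theorem sub {u v : ℕ → X} {l m : X} (hu : WeakConv u l) (hv : WeakConv v m) :
    WeakConv (fun k => u k - v k) (l - m) := fun x => by
  simpa only [inner_sub_right] using (hu x).sub (hv x)

theorem tendsto_apply {ι : Type*} {u : ℕ → lp (fun _ : ι => ℝ) 2} {l : lp (fun _ : ι => ℝ) 2}
    (hu : WeakConv u l) (i : ι) : Tendsto (fun k => u k i) atTop (𝓝 (l i)) := by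
  classical
  simpa [lp.inner_single_left] using hu (lp.single 2 i 1)

theorem ofReal_norm_le_liminf {u : ℕ → X} {l : X} (hu : WeakConv u l) :
    ENNReal.ofReal ‖l‖ ≤ liminf (fun k => ENNReal.ofReal ‖u k‖) atTop := by
  -- `‖l‖² = lim ⟪l, u k⟫ ≤ ‖l‖ · liminf ‖u k‖`, then cancel `‖l‖`.
  set a := ENNReal.ofReal ‖l‖
  rcases eq_or_ne a 0 with ha | ha
  · simp [ha]
  have hlim : Tendsto (fun k => ENNReal.ofReal ⟪l, u k⟫) atTop (𝓝 (a * a)) := by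
    rw [← ENNReal.ofReal_mul (norm_nonneg l), ← real_inner_self_eq_norm_mul_norm]
    exact (ENNReal.continuous_ofReal.tendsto _).comp (hu l)
  have : a * a ≤ a * liminf (fun k => ENNReal.ofReal ‖u k‖) atTop := calc
    a * a = liminf (fun k => ENNReal.ofReal ⟪l, u k⟫) atTop := hlim.liminf_eq.symm
    _ ≤ liminf (fun k => a * ENNReal.ofReal ‖u k‖) atTop := by
      refine liminf_le_liminf (Eventually.of_forall fun k => ?_)
      rw [← ENNReal.ofReal_mul (norm_nonneg l)]
      exact ENNReal.ofReal_le_ofReal (real_inner_le_norm l (u k))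
    _ = a * liminf (fun k => ENNReal.ofReal ‖u k‖) atTop :=
      ENNReal.liminf_const_mul_of_ne_top ENNReal.ofReal_ne_top
  exact (ENNReal.mul_le_mul_iff_right ha ENNReal.ofReal_ne_top).mp this

theorem ofReal_mul_sq_norm_le_liminf {u : ℕ → X} {l : X} (hu : WeakConv u l) (c : ℝ) :
    ENNReal.ofReal (c * ‖l‖ ^ 2) ≤ liminf (fun k => ENNReal.ofReal (c * ‖u k‖ ^ 2)) atTop := by
  set g : ℝ≥0∞ → ℝ≥0∞ := fun t => ENNReal.ofReal c * t ^ 2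
  have hg (x : X) : ENNReal.ofReal (c * ‖x‖ ^ 2) = g (ENNReal.ofReal ‖x‖) := by
    rw [ENNReal.ofReal_mul' (by positivity), ENNReal.ofReal_pow (norm_nonneg x)]
  have hg_mono : Monotone g := fun _ _ hst => mul_le_mul_right (pow_le_pow_left' hst 2) _
  have hg_cont : Continuous g :=
    (ENNReal.continuous_const_mul ENNReal.ofReal_ne_top).comp (ENNReal.continuous_pow 2)
  simp only [hg]
  exact (hg_mono hu.ofReal_norm_le_liminf).trans_eq
    (hg_mono.map_liminf_of_continuousAt _ hg_cont.continuousAt)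

end WeakConv

theorem anett_regularizer_weakly_lsc_general
    {X : Type*} [NormedAddCommGroup X] [InnerProductSpace ℝ X]
    {Λ : Type*}
    (E : X → lp (fun _ : Λ => ℝ) 2) (D : lp (fun _ : Λ => ℝ) 2 → X)
    (hE : WeakSeqCont E) (hD : WeakSeqCont D)
    (q : ℝ) (hq : 1 ≤ q) (c : ℝ)
    (w : Λ → ℝ)
    (Rc : X → ℝ≥0∞)
    (hRc : ∀ u : X, Rc u =
      (∑' lam : Λ, ENNReal.ofReal (w lam * |E u lam| ^ q)) +
        ENNReal.ofReal (c / 2 * ‖u - D (E u)‖ ^ 2)) :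
    ∀ (u : ℕ → X) (l : X), WeakConv u l →
      Rc l ≤ liminf (fun k => Rc (u k)) atTop := by
  intro u l hu
  have hEu : WeakConv (fun k => E (u k)) (E l) := hE u l hu
  have hres : WeakConv (fun k => u k - D (E (u k))) (l - D (E l)) := hu.sub (hD _ _ hEu)
  have hterm (lam : Λ) : Continuous fun t : ℝ => ENNReal.ofReal (w lam * |t| ^ q) :=
    ENNReal.continuous_ofReal.comp <| continuous_const.mul <|
      continuous_abs.rpow_const fun _ => Or.inr (zero_le_one.trans hq)
  simp only [hRc]
  refine le_trans (add_le_add ?_ ?_) (ENNReal.liminf_add_liminf_le_liminf_add _ _)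
  · exact ENNReal.tsum_le_liminf_tsum_of_tendsto fun lam =>
      ((hterm lam).tendsto _).comp (hEu.tendsto_apply lam)
  · exact hres.ofReal_mul_sq_norm_le_liminf (c / 2)

/-- under the standing assumptions the regularizer
`R_c(u) = Σ_λ w_λ |(E u)_λ|^q + (c/2)‖u − D(E u)‖²` is weakly sequentially
lower semicontinuous on `X`. -/
theorem anett_regularizer_weakly_lsc
    {X : Type*} [NormedAddCommGroup X] [InnerProductSpace ℝ X] [CompleteSpace X]
    {Λ : Type*} [Countable Λ]
    (E : X → lp (fun _ : Λ => ℝ) 2) (D : lp (fun _ : Λ => ℝ) 2 → X)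
    (hE : WeakSeqCont E) (hD : WeakSeqCont D)
    (q : ℝ) (hq : 1 ≤ q) (c : ℝ) (hc : 0 < c)
    (w : Λ → ℝ) (wmin : ℝ) (hwmin : 0 < wmin) (hw : ∀ lam, wmin ≤ w lam)
    (Rc : X → ℝ≥0∞)
    (hRc : ∀ u : X, Rc u =
      (∑' lam : Λ, ENNReal.ofReal (w lam * |E u lam| ^ q)) +
        ENNReal.ofReal (c / 2 * ‖u - D (E u)‖ ^ 2)) :
    ∀ (u : ℕ → X) (l : X), WeakConv u l →
      Rc l ≤ liminf (fun k => Rc (u k)) atTop :=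
  anett_regularizer_weakly_lsc_general E D hE hD q hq c w Rc hRc
end

section
/- (Stability/convergence of aNETT) Let y ∈ ran(K), let y_k ∈ Y with ‖y_k − y‖ ≤ δ_k, and let δ_k → 0, α_k → 0 and δ_k²/α_k → 0. If u_k minimizes T_{α_k, y_k}, then (u_k) has a weak accumulation point, every weak accumulation point u* of (u_k) satisfies K u* = y and R_c(u*) = min{R_c(v) : K v = y}, i.e. u* is an R_c-minimizing solution. -/
/-! Comparing the minimizer `u_k` of `T_{α_k, y_k}` with an `R`-finite solution `v` of `K v = y`
gives `‖K u_k - y_k‖² ≤ δ_k² + α_k R(v)` and `R(u_k) ≤ δ_k²/α_k + R(v)`. The first estimate forces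
`K u_k → y`. The second bounds `R(u_k)`, hence by coercivity `‖u_k‖`, so a subsequence converges
weakly (sequential Banach–Alaoglu on the separable closed span of the sequence, plus Riesz). At a
weak limit `u*` we get `K u* = y` because bounded operators are weakly continuous, and lower
semicontinuity together with the second estimate gives `R(u*) ≤ R(v)` for every solution `v`. -/

open scoped ENNReal
open RealInnerProductSpace Filter Topology

namespace WeakConv

variable {X : Type*} [NormedAddCommGroup X] [InnerProductSpace ℝ X] {u : ℕ → X} {l l' : X}

theorem of_tendsto (h : Tendsto u atTop (𝓝 l)) : WeakConv u l :=
  fun _ => tendsto_const_nhds.inner h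

theorem unique (h : WeakConv u l) (h' : WeakConv u l') : l = l' :=
  ext_inner_left ℝ fun v => tendsto_nhds_unique (h v) (h' v)

theorem map [CompleteSpace X] {Y : Type*} [NormedAddCommGroup Y] [InnerProductSpace ℝ Y]
    (K : X →L[ℝ] Y) (h : WeakConv u l) : WeakConv (K ∘ u) (K l) := by
  intro w
  have hK : ∀ x, ⟪w, K x⟫ = ⟪(InnerProductSpace.toDual ℝ X).symm ((innerSL ℝ w).comp K), x⟫ :=
    fun x => by rw [InnerProductSpace.toDual_symm_apply]; rfl
  simpa only [Function.comp_apply, hK] using h _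

end WeakConv

open TopologicalSpace in
theorem exists_weakConv_subseq_of_separableSpace {X : Type*} [NormedAddCommGroup X]
    [InnerProductSpace ℝ X] [CompleteSpace X] [SeparableSpace X] {u : ℕ → X} {M : ℝ}
    (hM : ∀ k, ‖u k‖ ≤ M) : ∃ (l : X) (φ : ℕ → ℕ), StrictMono φ ∧ WeakConv (u ∘ φ) l := by
  let ℓ : ℕ → WeakDual ℝ X := fun k => StrongDual.toWeakDual (InnerProductSpace.toDual ℝ X (u k))
  have hℓ : ∀ k, ℓ k ∈ WeakDual.toStrongDual ⁻¹' Metric.closedBall 0 M := fun k => by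
    simpa [ℓ] using hM k
  obtain ⟨ℓ₀, -, φ, hφ, hlim⟩ := WeakDual.isSeqCompact_closedBall ℝ X 0 M hℓ
  refine ⟨(InnerProductSpace.toDual ℝ X).symm (WeakDual.toStrongDual ℓ₀), φ, hφ, fun v => ?_⟩
  rw [real_inner_comm, InnerProductSpace.toDual_symm_apply]
  exact (((WeakDual.eval_continuous v).tendsto ℓ₀).comp hlim).congr fun k => real_inner_comm _ _

theorem exists_weakConv_subseq_of_bounded {X : Type*} [NormedAddCommGroup X]
    [InnerProductSpace ℝ X] [CompleteSpace X] {u : ℕ → X} {M : ℝ}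
    (hM : ∀ k, ‖u k‖ ≤ M) : ∃ (l : X) (φ : ℕ → ℕ), StrictMono φ ∧ WeakConv (u ∘ φ) l := by
  set H := (Submodule.span ℝ (Set.range u)).topologicalClosure
  have hsep : TopologicalSpace.SeparableSpace H :=
    (Set.countable_range u).isSeparable.span.closure.separableSpace
  let uH : ℕ → H := fun k =>
    ⟨u k, Submodule.le_topologicalClosure _ (Submodule.subset_span (Set.mem_range_self k))⟩
  obtain ⟨l, φ, hφ, hl⟩ := exists_weakConv_subseq_of_separableSpace (u := uH) hM
  refine ⟨l, φ, hφ, fun v => ?_⟩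
  -- `⟪v, h⟫ = ⟪P_H v, h⟫` for `h ∈ H`
  simpa [uH] using hl (H.orthogonalProjectionOnto v)

noncomputable def tikhonov {X Y : Type*} [SeminormedAddCommGroup Y] (F : X → Y) (R : X → ℝ≥0∞)
    (α : ℝ) (y : Y) (u : X) : ℝ≥0∞ :=
  ENNReal.ofReal (‖F u - y‖ ^ 2) + ENNReal.ofReal α * R u

section Tikhonov

variable {X Y : Type*} [SeminormedAddCommGroup Y] {F : X → Y} {R : X → ℝ≥0∞}

section Minimizer

variable {α δ : ℝ} {y : Y} {u v : X}

theorem tikhonov_le_of_norm_sub_le (hv : ‖F v - y‖ ≤ δ) :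
    tikhonov F R α y v ≤ ENNReal.ofReal (δ ^ 2) + ENNReal.ofReal α * R v := by
  unfold tikhonov
  gcongr

theorem sq_norm_sub_le_of_tikhonov_minimizer (hu : ∀ w, tikhonov F R α y u ≤ tikhonov F R α y w)
    (hα : 0 ≤ α) (hv : ‖F v - y‖ ≤ δ) (hRv : R v ≠ ⊤) :
    ‖F u - y‖ ^ 2 ≤ δ ^ 2 + α * (R v).toReal := by
  have h := le_self_add.trans ((hu v).trans (tikhonov_le_of_norm_sub_le hv))
  rw [← ENNReal.ofReal_toReal hRv, ← ENNReal.ofReal_mul hα,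
    ← ENNReal.ofReal_add (by positivity) (by positivity)] at h
  exact (ENNReal.ofReal_le_ofReal_iff (by positivity)).mp h

theorem regularizer_le_of_tikhonov_minimizer (hu : ∀ w, tikhonov F R α y u ≤ tikhonov F R α y w)
    (hα : 0 < α) (hv : ‖F v - y‖ ≤ δ) : R u ≤ ENNReal.ofReal (δ ^ 2 / α) + R v := by
  have h := le_add_self.trans ((hu v).trans (tikhonov_le_of_norm_sub_le hv))
  rwa [← ENNReal.mul_le_mul_iff_right (by simpa using hα) ENNReal.ofReal_ne_top, mul_add,
    ← ENNReal.ofReal_mul hα.le, mul_div_cancel₀ _ hα.ne']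

end Minimizer

variable {y : Y} {yk : ℕ → Y} {δ α : ℕ → ℝ} {u : ℕ → X} {v : X}

theorem tendsto_of_tikhonov_minimizers
    (hu : ∀ k w, tikhonov F R (α k) (yk k) (u k) ≤ tikhonov F R (α k) (yk k) w)
    (hα : ∀ k, 0 ≤ α k) (hyk : ∀ k, ‖yk k - y‖ ≤ δ k) (hδ0 : Tendsto δ atTop (𝓝 0))
    (hα0 : Tendsto α atTop (𝓝 0)) (hv : F v = y) (hRv : R v ≠ ⊤) :
    Tendsto (F ∘ u) atTop (𝓝 y) := by
  have hres : ∀ k, ‖F (u k) - yk k‖ ≤ √(δ k ^ 2 + α k * (R v).toReal) := fun k =>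
    Real.le_sqrt_of_sq_le <| sq_norm_sub_le_of_tikhonov_minimizer (hu k) (hα k)
      (δ := δ k) (by rw [hv, norm_sub_rev]; exact hyk k) hRv
  have hbound : Tendsto (fun k => √(δ k ^ 2 + α k * (R v).toReal) + δ k) atTop (𝓝 0) := by
    simpa using (((hδ0.pow 2).add (hα0.mul_const _)).sqrt).add hδ0
  refine tendsto_iff_norm_sub_tendsto_zero.mpr
    (squeeze_zero (fun _ => norm_nonneg _) (fun k => ?_) hbound)
  calc ‖F (u k) - y‖ ≤ ‖F (u k) - yk k‖ + ‖yk k - y‖ := norm_sub_le_norm_sub_add_norm_sub _ _ _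
    _ ≤ _ := add_le_add (hres k) (hyk k)

theorem exists_regularizer_bound_of_tikhonov_minimizers
    (hu : ∀ k w, tikhonov F R (α k) (yk k) (u k) ≤ tikhonov F R (α k) (yk k) w)
    (hα : ∀ k, 0 < α k) (hyk : ∀ k, ‖yk k - y‖ ≤ δ k)
    (hδα : Tendsto (fun k => δ k ^ 2 / α k) atTop (𝓝 0)) (hv : F v = y) (hRv : R v ≠ ⊤) :
    ∃ B ≠ ⊤, ∀ k, R (u k) ≤ B := by
  obtain ⟨C, hC⟩ := hδα.bddAbove_range
  refine ⟨ENNReal.ofReal C + R v, ENNReal.add_ne_top.mpr ⟨ENNReal.ofReal_ne_top, hRv⟩, fun k => ?_⟩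
  refine (regularizer_le_of_tikhonov_minimizer (hu k) (hα k)
    (δ := δ k) (by rw [hv, norm_sub_rev]; exact hyk k)).trans ?_
  gcongr
  exact hC ⟨k, rfl⟩

theorem liminf_regularizer_le_of_tikhonov_minimizers
    (hu : ∀ k w, tikhonov F R (α k) (yk k) (u k) ≤ tikhonov F R (α k) (yk k) w)
    (hα : ∀ k, 0 < α k) (hyk : ∀ k, ‖yk k - y‖ ≤ δ k)
    (hδα : Tendsto (fun k => δ k ^ 2 / α k) atTop (𝓝 0)) (hv : F v = y) :
    liminf (fun k => R (u k)) atTop ≤ R v := by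
  have hlim : Tendsto (fun k => ENNReal.ofReal (δ k ^ 2 / α k) + R v) atTop (𝓝 (R v)) := by
    simpa using (ENNReal.tendsto_ofReal hδα).add tendsto_const_nhds
  calc liminf (fun k => R (u k)) atTop
      ≤ liminf (fun k => ENNReal.ofReal (δ k ^ 2 / α k) + R v) atTop :=
        liminf_le_liminf <| Eventually.of_forall fun k =>
          regularizer_le_of_tikhonov_minimizer (hu k) (hα k) (δ := δ k)
            (by rw [hv, norm_sub_rev]; exact hyk k)
    _ = R v := hlim.liminf_eq

end Tikhonov

theorem exists_norm_le_of_coercive {X : Type*} [SeminormedAddCommGroup X] {R : X → ℝ≥0∞}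
    (hcoercive : ∀ u : ℕ → X, Tendsto (fun k => ‖u k‖) atTop atTop →
      Tendsto (fun k => R (u k)) atTop (𝓝 ⊤))
    {u : ℕ → X} {B : ℝ≥0∞} (hB : B ≠ ⊤) (hRu : ∀ k, R (u k) ≤ B) : ∃ M, ∀ k, ‖u k‖ ≤ M := by
  by_contra! h
  choose ψ hψ using fun n : ℕ => h n
  have hnorm : Tendsto (fun n => ‖u (ψ n)‖) atTop atTop :=
    tendsto_atTop_mono (fun n => (hψ n).le) tendsto_natCast_atTop_atTop
  obtain ⟨n, hn⟩ := ((hcoercive (u ∘ ψ) hnorm).eventually (lt_mem_nhds hB.lt_top)).exists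
  exact (hRu (ψ n)).not_gt hn

theorem anett_stability_convergence_general
    {X Y : Type*} [NormedAddCommGroup X] [InnerProductSpace ℝ X] [CompleteSpace X]
    [NormedAddCommGroup Y] [InnerProductSpace ℝ Y]
    (K : X →L[ℝ] Y) (R : X → ℝ≥0∞)
    (hcoercive : ∀ u : ℕ → X, Tendsto (fun k => ‖u k‖) atTop atTop →
      Tendsto (fun k => R (u k)) atTop (nhds ⊤))
    (hlsc : ∀ (u : ℕ → X) (l : X), WeakConv u l →
      R l ≤ liminf (fun k => R (u k)) atTop)
    (T : ℝ → Y → X → ℝ≥0∞)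
    (hT : ∀ (α : ℝ) (y' : Y) (u : X),
      T α y' u = ENNReal.ofReal (‖K u - y'‖ ^ 2) + ENNReal.ofReal α * R u)
    (y : Y)
    (hRy : ∃ v : X, K v = y ∧ R v ≠ ⊤)
    (yk : ℕ → Y) (δ : ℕ → ℝ) (α : ℕ → ℝ)
    (hα : ∀ k, 0 < α k)
    (hyk : ∀ k, ‖yk k - y‖ ≤ δ k)
    (hδ0 : Tendsto δ atTop (nhds 0))
    (hα0 : Tendsto α atTop (nhds 0))
    (hδα : Tendsto (fun k => δ k ^ 2 / α k) atTop (nhds 0))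
    (u : ℕ → X) (hu : ∀ k, ∀ v : X, T (α k) (yk k) (u k) ≤ T (α k) (yk k) v) :
    (∃ (ustar : X) (φ : ℕ → ℕ), StrictMono φ ∧ WeakConv (u ∘ φ) ustar) ∧
      ∀ (ustar : X) (φ : ℕ → ℕ), StrictMono φ → WeakConv (u ∘ φ) ustar →
        K ustar = y ∧ ∀ v : X, K v = y → R ustar ≤ R v := by
  obtain rfl : T = tikhonov K R := funext fun α => funext fun y' => funext (hT α y')
  obtain ⟨v₀, hv₀, hRv₀⟩ := hRy
  obtain ⟨B, hB, hRu⟩ := exists_regularizer_bound_of_tikhonov_minimizers hu hα hyk hδα hv₀ hRv₀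
  obtain ⟨M, hM⟩ := exists_norm_le_of_coercive hcoercive hB hRu
  have hKu : Tendsto (K ∘ u) atTop (𝓝 y) :=
    tendsto_of_tikhonov_minimizers hu (fun k => (hα k).le) hyk hδ0 hα0 hv₀ hRv₀
  refine ⟨exists_weakConv_subseq_of_bounded hM, fun ustar φ hφ hw => ⟨?_, fun v hv => ?_⟩⟩
  · exact (hw.map K).unique (.of_tendsto (hKu.comp hφ.tendsto_atTop))
  · exact (hlsc _ _ hw).trans <| liminf_regularizer_le_of_tikhonov_minimizers
      (fun k => hu (φ k)) (fun k => hα (φ k)) (fun k => hyk (φ k)) (hδα.comp hφ.tendsto_atTop) hv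

/-- stability / convergence of aNETT: with `y ∈ ran K`,
`‖y_k − y‖ ≤ δ_k`, `δ_k → 0`, `α_k → 0`, `δ_k²/α_k → 0`, and `u_k`
minimizers of `T_{α_k, y_k}`, the sequence `(u_k)` has a weak accumulation
point, and every weak accumulation point is an `R`-minimizing solution of
`K u = y`. -/
theorem anett_stability_convergence
    {X Y : Type*} [NormedAddCommGroup X] [InnerProductSpace ℝ X] [CompleteSpace X]
    [NormedAddCommGroup Y] [InnerProductSpace ℝ Y] [CompleteSpace Y]
    (K : X →L[ℝ] Y) (R : X → ℝ≥0∞)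
    (hcoercive : ∀ u : ℕ → X, Tendsto (fun k => ‖u k‖) atTop atTop →
      Tendsto (fun k => R (u k)) atTop (nhds ⊤))
    (hlsc : ∀ (u : ℕ → X) (l : X), WeakConv u l →
      R l ≤ liminf (fun k => R (u k)) atTop)
    (T : ℝ → Y → X → ℝ≥0∞)
    (hT : ∀ (α : ℝ) (y' : Y) (u : X),
      T α y' u = ENNReal.ofReal (‖K u - y'‖ ^ 2) + ENNReal.ofReal α * R u)
    (y : Y) (hy : ∃ v : X, K v = y)
    (hRy : ∃ v : X, K v = y ∧ R v ≠ ⊤)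
    (yk : ℕ → Y) (δ : ℕ → ℝ) (α : ℕ → ℝ)
    (hα : ∀ k, 0 < α k) (hδ : ∀ k, 0 ≤ δ k)
    (hyk : ∀ k, ‖yk k - y‖ ≤ δ k)
    (hδ0 : Tendsto δ atTop (nhds 0))
    (hα0 : Tendsto α atTop (nhds 0))
    (hδα : Tendsto (fun k => δ k ^ 2 / α k) atTop (nhds 0))
    (u : ℕ → X) (hu : ∀ k, ∀ v : X, T (α k) (yk k) (u k) ≤ T (α k) (yk k) v) :
    (∃ (ustar : X) (φ : ℕ → ℕ), StrictMono φ ∧ WeakConv (u ∘ φ) ustar) ∧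
      ∀ (ustar : X) (φ : ℕ → ℕ), StrictMono φ → WeakConv (u ∘ φ) ustar →
        K ustar = y ∧ ∀ v : X, K v = y → R ustar ≤ R v :=
  anett_stability_convergence_general K R hcoercive hlsc T hT y hRy yk δ α hα hyk hδ0 hα0 hδα u hu
end
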